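/- For every integer d ≥ 2 and all integers j₁, k₁, j₂, k₂, applying the pair of controlled-X gates (c-X)_{A₁A₂} · (c-X)_{B₁B₂} to the state |φ^{j₁,k₁}⟩_{A₁B₁} ⊗ |φ^{j₂,k₂}⟩_{A₂B₂} produces the state |φ^{j₁, k₁−k₂}⟩_{A₁B₁} ⊗ |φ^{j₁+j₂, k₂}⟩_{A₂B₂}. -/

import Mathlib

open Matrix

noncomputable def ω (d : ℕ) : ℂ := Complex.exp (2 * Real.pi * Complex.I / d)

/-- The generalized Pauli `X` on `ℂ^d`: `X |k⟩ = |k+1 mod d⟩`. -/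
def Xmat (d : ℕ) [NeZero d] : Matrix (ZMod d) (ZMod d) ℂ :=
  Matrix.of fun i k => if i = k + 1 then 1 else 0

def XmatInv (d : ℕ) [NeZero d] : Matrix (ZMod d) (ZMod d) ℂ :=
  Matrix.of fun i k => if k = i + 1 then 1 else 0

lemma Xmat_mul_XmatInv (d : ℕ) [NeZero d] : Xmat d * XmatInv d = 1 := by
  ext i k
  rw [Matrix.mul_apply, Finset.sum_eq_single (i - 1)]
  · simp only [Xmat, XmatInv, Matrix.of_apply, sub_add_cancel, Matrix.one_apply]
    simp [eq_comm]
  · intro c _ hc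
    have h : i ≠ c + 1 := fun h => hc (by rw [h, add_sub_cancel_right])
    simp [Xmat, Matrix.of_apply, h]
  · intro h; exact absurd (Finset.mem_univ _) h

/-- `X` as a unit (invertible matrix), so that integer powers `X ^ (j : ℤ)` make sense. -/
noncomputable def XU (d : ℕ) [NeZero d] : (Matrix (ZMod d) (ZMod d) ℂ)ˣ :=
  ⟨Xmat d, XmatInv d, Xmat_mul_XmatInv d, mul_eq_one_comm.mp (Xmat_mul_XmatInv d)⟩

/-- The generalized Pauli `Z` on `ℂ^d`: `Z |k⟩ = ω^k |k⟩`. -/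
noncomputable def Zmat (d : ℕ) [NeZero d] : Matrix (ZMod d) (ZMod d) ℂ :=
  Matrix.diagonal fun i => ω d ^ i.val

lemma omega_ne_zero (d : ℕ) : ω d ≠ 0 := Complex.exp_ne_zero _

/-- `Z` as a unit (invertible matrix). -/
noncomputable def ZU (d : ℕ) [NeZero d] : (Matrix (ZMod d) (ZMod d) ℂ)ˣ :=
  ⟨Zmat d, Matrix.diagonal fun i => (ω d ^ i.val)⁻¹,
   by
    rw [Zmat, Matrix.diagonal_mul_diagonal]
    have h : (fun i : ZMod d => ω d ^ i.val * (ω d ^ i.val)⁻¹) = fun _ => (1 : ℂ) := by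
      funext i
      exact mul_inv_cancel₀ (pow_ne_zero _ (omega_ne_zero d))
    rw [h, Matrix.diagonal_one],
   by
    rw [Zmat, Matrix.diagonal_mul_diagonal]
    have h : (fun i : ZMod d => (ω d ^ i.val)⁻¹ * ω d ^ i.val) = fun _ => (1 : ℂ) := by
      funext i
      exact inv_mul_cancel₀ (pow_ne_zero _ (omega_ne_zero d))
    rw [h, Matrix.diagonal_one]⟩

/-- Integer power `X^j` of the generalized Pauli `X`. -/
noncomputable def Xpow (d : ℕ) [NeZero d] (j : ℤ) : Matrix (ZMod d) (ZMod d) ℂ := ↑(XU d ^ j)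

/-- Integer power `Z^k` of the generalized Pauli `Z`. -/
noncomputable def Zpow (d : ℕ) [NeZero d] (k : ℤ) : Matrix (ZMod d) (ZMod d) ℂ := ↑(ZU d ^ k)

/-- The maximally entangled state `|φ⟩ = (1/√d) ∑ i, |i⟩⊗|i⟩` on `ℂ^d ⊗ ℂ^d`. -/
noncomputable def phi (d : ℕ) [NeZero d] : ZMod d × ZMod d → ℂ :=
  (1 / (Real.sqrt d : ℂ)) •
    ∑ i : ZMod d, fun p : ZMod d × ZMod d =>
      (if p.1 = i then (1 : ℂ) else 0) * (if p.2 = i then 1 else 0)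

/-- The Bell state `|φ^{j,k}⟩ = (X^j Z^k ⊗ I)|φ⟩` (exponents mod `d`). -/
noncomputable def bell (d : ℕ) [NeZero d] (j k : ℤ) : ZMod d × ZMod d → ℂ :=
  Matrix.mulVec
    (Matrix.kroneckerMap (· * ·) (Xpow d j * Zpow d k) (1 : Matrix (ZMod d) (ZMod d) ℂ))
    (phi d)

/-- Embed a two-qudit gate `G` into a multi-register system, acting on registers `r` (first
tensor factor of `G`) and `s` (second tensor factor of `G`), identity elsewhere. -/
def gate2 {ι : Type*} [Fintype ι] [DecidableEq ι] (d : ℕ) [NeZero d]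
    (G : Matrix (ZMod d × ZMod d) (ZMod d × ZMod d) ℂ) (r s : ι) :
    Matrix (ι → ZMod d) (ι → ZMod d) ℂ :=
  Matrix.of fun p q =>
    if ∀ t, t ≠ r → t ≠ s → p t = q t then G (p r, p s) (q r, q s) else 0

/-- Embed a single-qudit gate `M` into a multi-register system, acting on register `r`. -/
def gate1 {ι : Type*} [Fintype ι] [DecidableEq ι] (d : ℕ) [NeZero d]
    (M : Matrix (ZMod d) (ZMod d) ℂ) (r : ι) :
    Matrix (ι → ZMod d) (ι → ZMod d) ℂ :=
  Matrix.of fun p q => if ∀ t, t ≠ r → p t = q t then M (p r) (q r) else 0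

/-- The controlled gate `c-U` on `ℂ^d ⊗ ℂ^d`: `(c-U)|j⟩|k⟩ = |j⟩ ⊗ U^j |k⟩`, the first factor
being the control register. -/
noncomputable def ctrl (d : ℕ) [NeZero d] (U : (Matrix (ZMod d) (ZMod d) ℂ)ˣ) :
    Matrix (ZMod d × ZMod d) (ZMod d × ZMod d) ℂ :=
  Matrix.of fun p q =>
    if p.1 = q.1 then ((U ^ q.1.val : (Matrix (ZMod d) (ZMod d) ℂ)ˣ) : Matrix (ZMod d) (ZMod d) ℂ) p.2 q.2
    else 0

/-!
Both controlled-`X` gates permute the computational basis, so each acts on a state by a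
substitution of the arguments: `(c-X)_{A₁A₂}` sends the amplitude at `(a, c)` to `(a, c + a)`.
The Bell amplitudes are `⟨a, b|φ^{j,k}⟩ = [a = b + j] ω^{b k} / √d`. After the substitution
`(c, e) ↦ (c - a, e - b)` in the second pair, the support condition `c - a = (e - b) + j₂` becomes
`c = e + j₁ + j₂` on the support `a = b + j₁` of the first pair, and the phase
`ω^{b k₁} ω^{(e - b) k₂}` regroups as `ω^{b (k₁ - k₂)} ω^{e k₂}`, because `b ↦ ω^b` is a character
of `ZMod d`.
-/

open Function

theorem Units.val_zpow_of_val_eq_map {G M : Type*} [Group G] [Monoid M] (f : G →* M) {u : Mˣ}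
    {g : G} (h : (u : M) = f g) (k : ℤ) : ((u ^ k : Mˣ) : M) = f (g ^ k) := by
  rw [show u = f.toHomUnits g from Units.ext h, ← map_zpow, MonoidHom.coe_toHomUnits]

section ShiftMatrix

variable {G : Type*} [AddCommGroup G] [DecidableEq G] (R : Type*) [Semiring R]

def shiftMatrix (c : G) : Matrix G G R :=
  of fun a b => if a = b + c then 1 else 0

theorem shiftMatrix_zero : shiftMatrix R (0 : G) = 1 := by
  ext a b
  simp [shiftMatrix, one_apply]

theorem shiftMatrix_mul_shiftMatrix [Fintype G] (c c' : G) :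
    shiftMatrix R c * shiftMatrix R c' = shiftMatrix R (c + c') := by
  ext a b
  simp [shiftMatrix, mul_apply, add_assoc, add_comm c]

def shiftMatrixHom [Fintype G] : Multiplicative G →* Matrix G G R where
  toFun c := shiftMatrix R c.toAdd
  map_one' := shiftMatrix_zero R
  map_mul' _ _ := (shiftMatrix_mul_shiftMatrix R _ _).symm

end ShiftMatrix

def unitsDiagonalHom (ι R : Type*) [Fintype ι] [DecidableEq ι] [Semiring R] :
    (ι → Rˣ) →* Matrix ι ι R where
  toFun w := diagonal fun i => (w i : R)
  map_one' := by simp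
  map_mul' w w' := by simp [diagonal_mul_diagonal]

theorem kroneckerMap_one_mulVec_apply {m n R : Type*} [Fintype m] [Fintype n] [DecidableEq n]
    [Semiring R] (M : Matrix m m R) (v : m × n → R) (a : m) (b : n) :
    (kroneckerMap (· * ·) M (1 : Matrix n n R) *ᵥ v) (a, b) = ∑ x, M a x * v (x, b) := by
  simp [mulVec, dotProduct, Fintype.sum_prod_type, one_apply]

section Pauli

variable (d : ℕ) [NeZero d]

theorem omega_pow_eq_one : ω d ^ d = 1 :=
  (Complex.isPrimitiveRoot_exp d (NeZero.ne d)).pow_eq_one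

theorem omega_pow_val_add (a b : ZMod d) : ω d ^ (a + b).val = ω d ^ a.val * ω d ^ b.val :=
  (AddChar.zmodChar d (omega_pow_eq_one d)).map_add_eq_mul a b

theorem Xpow_eq_shiftMatrix (j : ℤ) : Xpow d j = shiftMatrix ℂ (j : ZMod d) := by
  rw [Xpow, Units.val_zpow_of_val_eq_map (shiftMatrixHom ℂ) (g := Multiplicative.ofAdd 1) rfl,
    ← ofAdd_zsmul, zsmul_one]
  rfl

theorem Zpow_eq_diagonal (k : ℤ) : Zpow d k = diagonal fun i : ZMod d => (ω d ^ i.val) ^ k := by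
  let g : ZMod d → ℂˣ := fun i => Units.mk0 (ω d ^ i.val) (pow_ne_zero _ (omega_ne_zero d))
  rw [Zpow, Units.val_zpow_of_val_eq_map (unitsDiagonalHom _ ℂ) (g := g) rfl]
  simp [unitsDiagonalHom, g, Units.val_zpow_eq_zpow_val]

theorem Xpow_mul_Zpow_apply (j k : ℤ) (a b : ZMod d) :
    (Xpow d j * Zpow d k) a b = if a = b + j then (ω d ^ b.val) ^ k else 0 := by
  simp [Xpow_eq_shiftMatrix, Zpow_eq_diagonal, shiftMatrix]

theorem ctrl_XU_apply (x y : ZMod d × ZMod d) :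
    ctrl d (XU d) x y = if y = (x.1, x.2 - x.1) then 1 else 0 := by
  have hpow (n : ℕ) : ((XU d ^ n : (Matrix (ZMod d) (ZMod d) ℂ)ˣ) : Matrix _ _ ℂ) = Xpow d n := by
    rw [Xpow, zpow_natCast]
  simp only [ctrl, of_apply, hpow, Xpow_eq_shiftMatrix, shiftMatrix, Int.cast_natCast,
    ZMod.natCast_zmod_val, Prod.ext_iff]
  grind

end Pauli

section Bell

variable (d : ℕ) [NeZero d]

theorem phi_apply (a b : ZMod d) :
    phi d (a, b) = 1 / (Real.sqrt d : ℂ) * if a = b then 1 else 0 := by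
  simp [phi, Finset.sum_apply]

theorem bell_apply (j k : ℤ) (a b : ZMod d) :
    bell d j k (a, b) = 1 / (Real.sqrt d : ℂ) * if a = b + j then (ω d ^ b.val) ^ k else 0 := by
  rw [bell, kroneckerMap_one_mulVec_apply]
  simp only [phi_apply, mul_ite, mul_one, mul_zero, Finset.sum_ite_eq', Finset.mem_univ, if_true]
  rw [Xpow_mul_Zpow_apply, mul_comm, mul_ite, mul_zero]

theorem bell_mul_bell_sub (j₁ k₁ j₂ k₂ : ℤ) (a b c e : ZMod d) :
    bell d j₁ k₁ (a, b) * bell d j₂ k₂ (c - a, e - b) =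
      bell d j₁ (k₁ - k₂) (a, b) * bell d (j₁ + j₂) k₂ (c, e) := by
  simp only [bell_apply]
  by_cases ha : a = b + j₁
  · subst ha
    have hc : c - (b + j₁) = e - b + j₂ ↔ c = e + ((j₁ + j₂ : ℤ) : ZMod d) := by
      push_cast
      constructor <;> intro h <;> linear_combination h
    rw [if_pos rfl, if_pos rfl]
    simp only [hc]
    split_ifs
    · have hsplit : ω d ^ e.val = ω d ^ b.val * ω d ^ (e - b).val := by
        rw [← omega_pow_val_add, add_sub_cancel]
      have hb : ω d ^ b.val ≠ 0 := pow_ne_zero _ (omega_ne_zero d)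
      have hbk : (ω d ^ b.val) ^ k₂ ≠ 0 := zpow_ne_zero _ hb
      rw [hsplit, mul_zpow, zpow_sub₀ hb]
      field_simp
    · simp
  · simp [ha]

end Bell

section Gates

variable {ι : Type*} [Fintype ι] [DecidableEq ι] (d : ℕ) [NeZero d]

theorem gate2_apply_of_apply_eq_ite (G : Matrix (ZMod d × ZMod d) (ZMod d × ZMod d) ℂ)
    (f : ZMod d × ZMod d → ZMod d × ZMod d) (hG : ∀ x y, G x y = if y = f x then 1 else 0)
    {r s : ι} (hrs : r ≠ s) (p q : ι → ZMod d) :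
    gate2 d G r s p q =
      if q = update (update p r (f (p r, p s)).1) s (f (p r, p s)).2 then 1 else 0 := by
  set q₀ := update (update p r (f (p r, p s)).1) s (f (p r, p s)).2
  have hsupport : ((∀ t, t ≠ r → t ≠ s → p t = q t) ∧ (q r, q s) = f (p r, p s)) ↔ q = q₀ := by
    constructor
    · rintro ⟨hpq, hf⟩
      funext t
      rw [Prod.ext_iff] at hf
      grind [update_apply]
    · rintro rfl
      grind [update_apply]
  simp only [gate2, of_apply, hG, ← ite_and, hsupport]

theorem gate2_mulVec_apply_of_apply_eq_ite (G : Matrix (ZMod d × ZMod d) (ZMod d × ZMod d) ℂ)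
    (f : ZMod d × ZMod d → ZMod d × ZMod d) (hG : ∀ x y, G x y = if y = f x then 1 else 0)
    {r s : ι} (hrs : r ≠ s) (v : (ι → ZMod d) → ℂ) (p : ι → ZMod d) :
    (gate2 d G r s *ᵥ v) p = v (update (update p r (f (p r, p s)).1) s (f (p r, p s)).2) := by
  simp [mulVec, dotProduct, gate2_apply_of_apply_eq_ite d G f hG hrs]

theorem gate2_ctrl_XU_mulVec_apply {r s : ι} (hrs : r ≠ s) (v : (ι → ZMod d) → ℂ)
    (p : ι → ZMod d) :
    (gate2 d (ctrl d (XU d)) r s *ᵥ v) p = v (update p s (p s - p r)) := by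
  rw [gate2_mulVec_apply_of_apply_eq_ite d _ _ (ctrl_XU_apply d) hrs, update_eq_self]

end Gates

-- Registers are ordered `A₁ = 0`, `B₁ = 1`, `A₂ = 2`, `B₂ = 3`.
theorem cnot_pair_on_bell_states_general (d : ℕ) [NeZero d] (j₁ k₁ j₂ k₂ : ℤ) :
    Matrix.mulVec
        (gate2 d (ctrl d (XU d)) (0 : Fin 4) 2 * gate2 d (ctrl d (XU d)) (1 : Fin 4) 3)
        (fun p : Fin 4 → ZMod d => bell d j₁ k₁ (p 0, p 1) * bell d j₂ k₂ (p 2, p 3)) =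
      fun p : Fin 4 → ZMod d =>
        bell d j₁ (k₁ - k₂) (p 0, p 1) * bell d (j₁ + j₂) k₂ (p 2, p 3) := by
  funext p
  rw [← mulVec_mulVec, gate2_ctrl_XU_mulVec_apply d (by decide),
    gate2_ctrl_XU_mulVec_apply d (by decide)]
  simp only [ne_eq, Fin.reduceEq, not_false_eq_true, update_of_ne, update_self]
  exact bell_mul_bell_sub d j₁ k₁ j₂ k₂ _ _ _ _

/-- Registers are ordered `A₁ = 0`, `B₁ = 1`, `A₂ = 2`, `B₂ = 3`.
Applying `(c-X)_{A₁A₂} · (c-X)_{B₁B₂}` to `|φ^{j₁,k₁}⟩_{A₁B₁} ⊗ |φ^{j₂,k₂}⟩_{A₂B₂}` produces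
`|φ^{j₁, k₁−k₂}⟩_{A₁B₁} ⊗ |φ^{j₁+j₂, k₂}⟩_{A₂B₂}`. -/
theorem cnot_pair_on_bell_states (d : ℕ) [NeZero d] (hd : 2 ≤ d) (j₁ k₁ j₂ k₂ : ℤ) :
    Matrix.mulVec
        (gate2 d (ctrl d (XU d)) (0 : Fin 4) 2 * gate2 d (ctrl d (XU d)) (1 : Fin 4) 3)
        (fun p : Fin 4 → ZMod d => bell d j₁ k₁ (p 0, p 1) * bell d j₂ k₂ (p 2, p 3)) =
      fun p : Fin 4 → ZMod d =>
        bell d j₁ (k₁ - k₂) (p 0, p 1) * bell d (j₁ + j₂) k₂ (p 2, p 3) :=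
  cnot_pair_on_bell_states_general d j₁ k₁ j₂ k₂
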